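/- arXiv:1309.6911 — 3 statements merged into one kernel-verified Lean document; each statement's English description precedes it below -/
import Mathlib

section
/- If a and b are Moore-Penrose invertible elements of a C*-algebra and (a,b) doubly commutes, then ab is Moore-Penrose invertible and (ab)† = b†a†. -/
/-!
The argument only uses the ring structure and the involution. The key fact is Fuglede-like: if `b`
commutes with both `a` and `a*`, then it commutes with `a†`, because `a†` can be written both as
`a† (a†)* a*` and as `a* (a†)* a†`. Double commutation of `(a, b)` thus makes each of `a, a†`
commute with each of `b, b†`, and then the four Penrose equations for `ab` and `b†a†` split into
those for `a` and for `b`.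
-/

/-- `b` satisfies the four Penrose equations for `a`. -/
def IsMP {R : Type*} [Ring R] [StarRing R] (a b : R) : Prop :=
  a * b * a = a ∧ b * a * b = b ∧ star (b * a) = b * a ∧ star (a * b) = a * b

namespace IsMP

variable {R : Type*} [Ring R] [StarRing R] {a ad b bd : R}

theorem commute_of_commute (h : IsMP a ad) (hb : Commute a b) (hb' : Commute (star a) b) :
    Commute ad b := by
  obtain ⟨e1, e2, e3, e4⟩ := h
  have star_absorb_left : ad * a * star a = star a := by rw [← e3, ← star_mul, ← mul_assoc, e1]
  have star_absorb_right : star a * a * ad = star a := by rw [mul_assoc, ← e4, ← star_mul, e1]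
  have inv_eq_star_left : star a * star ad * ad = ad := by rw [← star_mul, e3, e2]
  have inv_eq_star_right : ad * star ad * star a = ad := by
    rw [mul_assoc, ← star_mul, e4, ← mul_assoc, e2]
  calc ad * b = ad * star ad * (star a * b) := by rw [← mul_assoc, inv_eq_star_right]
    _ = ad * star ad * (b * (star a * a * ad)) := by rw [star_absorb_right, hb'.eq]
    _ = ad * star ad * star a * a * b * ad := by
      simp only [mul_assoc, hb'.left_comm, hb.left_comm]
    _ = ad * a * b * (star a * star ad * ad) := by rw [inv_eq_star_right, inv_eq_star_left]
    _ = ad * a * star a * b * star ad * ad := by simp only [mul_assoc, hb'.left_comm]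
    _ = b * (star a * star ad * ad) := by rw [star_absorb_left]; simp only [mul_assoc, hb'.left_comm]
    _ = b * ad := by rw [inv_eq_star_left]

theorem mul_of_commute (ha : IsMP a ad) (hb : IsMP b bd) (hab : Commute a b)
    (hadb : Commute ad b) (habd : Commute a bd) (hadbd : Commute ad bd) :
    IsMP (a * b) (bd * ad) := by
  obtain ⟨a1, a2, a3, a4⟩ := ha
  obtain ⟨b1, b2, b3, b4⟩ := hb
  have commute_mul_inv : ∀ {x}, Commute a x → Commute ad x → Commute x (a * ad) := fun h h' =>
    h.symm.mul_right h'.symm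
  have commute_inv_mul : ∀ {x}, Commute a x → Commute ad x → Commute x (ad * a) := fun h h' =>
    h'.symm.mul_right h.symm
  have right : a * b * (bd * ad) = a * ad * (b * bd) := by
    rw [mul_assoc, ← mul_assoc b, ((hadb.mul_right hadbd).symm).eq, ← mul_assoc]
  have left : bd * ad * (a * b) = ad * a * (bd * b) := by
    rw [← mul_assoc, mul_assoc bd, (commute_inv_mul habd hadbd).eq, mul_assoc]
  refine ⟨?_, ?_, ?_, ?_⟩
  · rw [right, (hab.symm.mul_left habd.symm).mul_mul_mul_comm, a1, b1]
  · rw [left, ← hadbd.eq, (hadbd.symm.mul_left hadb.symm).mul_mul_mul_comm, a2, b2]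
  · rw [left, star_mul, a3, b3]
    exact (commute_inv_mul habd hadbd).mul_left (commute_inv_mul hab hadb)
  · rw [right, star_mul, a4, b4]
    exact (commute_mul_inv hab hadb).mul_left (commute_mul_inv habd hadbd)

end IsMP

variable {A : Type*} [NormedRing A] [StarRing A] [CStarRing A] [CompleteSpace A]
  [NormedAlgebra ℂ A] [StarModule ℂ A]

theorem stmt8 (a ad b bd : A) (ha : IsMP a ad) (hb : IsMP b bd)
    (h1 : a * b = b * a) (h2 : a * star b = star b * a) :
    IsMP (a * b) (bd * ad) := by
  have hab : Commute a b := h1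
  have habs : Commute a (star b) := h2
  have hadb : Commute ad b := ha.commute_of_commute hab (by simpa using habs.star_star)
  have hadbs : Commute ad (star b) := ha.commute_of_commute habs hab.star_star
  have habd : Commute a bd := (hb.commute_of_commute hab.symm habs.symm).symm
  have hadbd : Commute ad bd := (hb.commute_of_commute hadb.symm hadbs.symm).symm
  exact ha.mul_of_commute hb hab hadb habd hadbd
end

section
/- Let a₁, …, aₙ be Moore-Penrose invertible elements of a C*-algebra such that aᵢaⱼ = aⱼaᵢ and aᵢaⱼ* = aⱼ*aᵢ for all i ≠ j. Then the product a₁⋯aₙ is Moore-Penrose invertible and (a₁⋯aₙ)† = aₙ†⋯a₁† = a₁†⋯aₙ†. -/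
section

variable {R : Type*} [Monoid R] [StarMul R] {a b c p : R}

def DoublyCommute (a b : R) : Prop := Commute a b ∧ Commute a (star b)

namespace DoublyCommute

theorem symm (h : DoublyCommute a b) : DoublyCommute b a :=
  ⟨h.1.symm, (commute_star_comm.2 h.2).symm⟩

theorem star_right (h : DoublyCommute a b) : DoublyCommute a (star b) :=
  ⟨h.2, by rw [star_star]; exact h.1⟩

theorem mul_right (hb : DoublyCommute a b) (hc : DoublyCommute a c) :
    DoublyCommute a (b * c) :=
  ⟨hb.1.mul_right hc.1, by rw [star_mul]; exact hc.2.mul_right hb.2⟩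

theorem list_prod_right {l : List R} (h : ∀ x ∈ l, DoublyCommute a x) :
    DoublyCommute a l.prod := by
  induction l with
  | nil => exact ⟨Commute.one_right a, by rw [List.prod_nil, star_one]; exact Commute.one_right a⟩
  | cons x l ih =>
    rw [List.prod_cons]
    exact (h x List.mem_cons_self).mul_right (ih fun y hy => h y (List.mem_cons_of_mem x hy))

end DoublyCommute

theorem IsSelfAdjoint.commute_of_mul_mul_eq (hp : IsSelfAdjoint p) (hb : p * b * p = b * p)
    (hb' : p * star b * p = star b * p) : Commute p b := by
  have hpbp : p * b * p = p * b := by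
    simpa only [star_mul, star_star, hp.star_eq, mul_assoc] using congrArg star hb'
  exact hpbp.symm.trans hb

end

namespace IsMP

variable {R : Type*} [Ring R] [StarRing R] {a ad b bd c : R}

protected theorem one : IsMP (1 : R) 1 := by
  refine ⟨?_, ?_, ?_, ?_⟩ <;> simp

theorem inv_mul_mul_mul_inv_mul_eq (h : IsMP a ad) (hc : Commute (star a) c) :
    ad * a * c * (ad * a) = c * (ad * a) := by
  have hq : ad * a = star a * star ad := by rw [← h.2.2.1, star_mul]
  have hqa : ad * a * star a = star a := by
    simpa only [star_mul, star_star, h.2.2.1, mul_assoc] using congrArg star h.1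
  calc ad * a * c * (ad * a) = ad * a * (c * star a) * star ad := by
        rw [hq]; simp only [mul_assoc]
    _ = ad * a * star a * c * star ad := by rw [← hc.eq]; simp only [mul_assoc]
    _ = c * (ad * a) := by rw [hqa, hc.eq, hq, mul_assoc]

theorem mul_inv_mul_mul_mul_inv_eq (h : IsMP a ad) (hc : Commute a c) :
    a * ad * c * (a * ad) = c * (a * ad) := by
  calc a * ad * c * (a * ad) = a * ad * (c * a) * ad := by simp only [mul_assoc]
    _ = a * ad * a * c * ad := by rw [← hc.eq]; simp only [mul_assoc]
    _ = c * (a * ad) := by rw [h.1, hc.eq, mul_assoc]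

theorem commute_of_doublyCommute (h : IsMP a ad) (hb : DoublyCommute a b) : Commute ad b := by
  have hq : Commute (ad * a) b := IsSelfAdjoint.commute_of_mul_mul_eq h.2.2.1
    (h.inv_mul_mul_mul_inv_mul_eq (commute_star_comm.2 hb.2))
    (h.inv_mul_mul_mul_inv_mul_eq hb.1.star_star)
  have hp : Commute (a * ad) b := IsSelfAdjoint.commute_of_mul_mul_eq h.2.2.2
    (h.mul_inv_mul_mul_mul_inv_eq hb.1) (h.mul_inv_mul_mul_mul_inv_eq hb.2)
  calc ad * b = ad * (a * ad * b) := by rw [← mul_assoc, ← mul_assoc, h.2.1]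
    _ = ad * a * b * ad := by rw [hp.eq, ← hb.1.left_comm]; simp only [mul_assoc]
    _ = b * ad := by rw [hq.eq, mul_assoc, h.2.1]

theorem doublyCommute_left (h : IsMP a ad) (hb : DoublyCommute a b) : DoublyCommute ad b :=
  ⟨h.commute_of_doublyCommute hb, h.commute_of_doublyCommute hb.star_right⟩

theorem doublyCommute (ha : IsMP a ad) (hb : IsMP b bd) (hab : DoublyCommute a b) :
    DoublyCommute ad bd :=
  (hb.doublyCommute_left (ha.doublyCommute_left hab).symm).symm

theorem mul (ha : IsMP a ad) (hb : IsMP b bd) (hab : DoublyCommute a b) :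
    IsMP (a * b) (bd * ad) := by
  have h_ad_b : Commute ad b := (ha.doublyCommute_left hab).1
  have h_a_bd : Commute a bd := (hb.doublyCommute_left hab.symm).1.symm
  have h_ad_bd : Commute ad bd := (ha.doublyCommute hb hab).1
  have h_bb_ad : Commute (b * bd) ad := (h_ad_b.mul_right h_ad_bd).symm
  have h_bb_a : Commute (b * bd) a := (hab.1.mul_right h_a_bd).symm
  have h_bd_ada : Commute bd (ad * a) := (h_ad_bd.mul_left h_a_bd).symm
  refine ⟨?_, ?_, ?_, ?_⟩
  · calc a * b * (bd * ad) * (a * b) = a * ((b * bd) * (ad * a)) * b := by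
          simp only [mul_assoc]
      _ = a * ad * a * (b * bd * b) := by
          rw [(h_bb_ad.mul_right h_bb_a).eq]; simp only [mul_assoc]
      _ = a * b := by rw [ha.1, hb.1]
  · calc bd * ad * (a * b) * (bd * ad) = bd * ((ad * a) * (b * bd)) * ad := by
          simp only [mul_assoc]
      _ = bd * b * bd * (ad * a * ad) := by
          rw [← (h_bb_ad.mul_right h_bb_a).eq]; simp only [mul_assoc]
      _ = bd * ad := by rw [ha.2.1, hb.2.1]
  · have h_eq : bd * ad * (a * b) = ad * a * (bd * b) := by
      rw [← mul_assoc, mul_assoc bd, h_bd_ada.eq]; simp only [mul_assoc]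
    rw [h_eq]
    exact (IsSelfAdjoint.commute_iff ha.2.2.1 hb.2.2.1).1
      (h_bd_ada.symm.mul_right (h_ad_b.mul_left hab.1))
  · have h_eq : a * b * (bd * ad) = a * ad * (b * bd) := by
      rw [mul_assoc, ← mul_assoc b, h_bb_ad.eq]; simp only [mul_assoc]
    rw [h_eq]
    exact (IsSelfAdjoint.commute_iff ha.2.2.2 hb.2.2.2).1
      (h_bb_a.symm.mul_left h_bb_ad.symm)

end IsMP

theorem isMP_prod_ofFn {R : Type*} [Ring R] [StarRing R] {n : ℕ} (a ad : Fin n → R)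
    (h : ∀ i, IsMP (a i) (ad i)) (hdc : Pairwise fun i j => DoublyCommute (a i) (a j)) :
    IsMP (List.ofFn a).prod (List.ofFn ad).reverse.prod := by
  induction n with
  | zero => exact IsMP.one
  | succ n ih =>
    have h_tail := ih (fun i => a i.succ) (fun i => ad i.succ) (fun i => h i.succ)
      (hdc.comp_of_injective (Fin.succ_injective n))
    have h_head : DoublyCommute (a 0) (List.ofFn fun i => a i.succ).prod :=
      DoublyCommute.list_prod_right fun x hx => by
        obtain ⟨i, rfl⟩ := List.mem_ofFn.1 hx
        exact hdc (Fin.succ_ne_zero i).symm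
    rw [List.ofFn_succ, List.ofFn_succ, List.prod_cons, List.reverse_cons, List.prod_append,
      List.prod_singleton]
    exact (h 0).mul h_tail h_head

variable {A : Type*} [NormedRing A] [StarRing A] [CStarRing A] [CompleteSpace A]
  [NormedAlgebra ℂ A] [StarModule ℂ A]

theorem stmt10 {n : ℕ} (a ad : Fin n → A) (h : ∀ i, IsMP (a i) (ad i))
    (hc : ∀ i j, i ≠ j → a i * a j = a j * a i)
    (hsc : ∀ i j, i ≠ j → a i * star (a j) = star (a j) * a i) :
    IsMP (List.ofFn a).prod ((List.ofFn ad).reverse.prod) ∧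
      (List.ofFn ad).reverse.prod = (List.ofFn ad).prod := by
  have hdc : Pairwise fun i j => DoublyCommute (a i) (a j) := fun i j hij =>
    ⟨hc i j hij, hsc i j hij⟩
  have had : (List.ofFn ad).Pairwise Commute :=
    List.pairwise_ofFn.2 fun i j hij => ((h i).doublyCommute (h j) (hdc hij.ne)).1
  exact ⟨isMP_prod_ofFn a ad h hdc,
    (List.reverse_perm _).prod_eq' (List.pairwise_reverse.2 (had.imp Commute.symm))⟩
end

section
/- Let a and b be elements of a C*-algebra such that ab, ba, a*b, and ba* are Moore-Penrose invertible with (ab)† = (ba)† and (a*b)† = (ba*)†. Then (a,b) is a doubly commuting pair: ab = ba and a*b = ba*. -/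
namespace IsMP

variable {R : Type*} [Ring R] [StarRing R] {a p q : R}

theorem symm (h : IsMP a p) : IsMP p a :=
  ⟨h.2.1, h.1, h.2.2.2, h.2.2.1⟩

theorem unique (hp : IsMP a p) (hq : IsMP a q) : p = q := by
  obtain ⟨hp1, hp2, hp3, hp4⟩ := hp
  obtain ⟨hq1, hq2, hq3, hq4⟩ := hq
  have hap : a * p = a * q :=
    calc a * p = a * q * (a * p) := by rw [← mul_assoc, hq1]
      _ = star (a * p * (a * q)) := by rw [star_mul, hp4, hq4]
      _ = a * q := by rw [← mul_assoc, hp1, hq4]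
  have hpa : p * a = q * a :=
    calc p * a = p * a * (q * a) := by rw [mul_assoc p, ← mul_assoc a, hq1]
      _ = star (q * a * (p * a)) := by rw [star_mul, hp3, hq3]
      _ = q * a := by rw [mul_assoc q, ← mul_assoc a, hp1, hq3]
  calc p = p * (a * p) := by rw [← mul_assoc, hp2]
    _ = q * a * q := by rw [hap, ← mul_assoc, hpa]
    _ = q := hq2

end IsMP

variable {A : Type*} [NormedRing A] [StarRing A] [CStarRing A] [CompleteSpace A]
  [NormedAlgebra ℂ A] [StarModule ℂ A]

theorem stmt11 (a b x y : A) (h1 : IsMP (a * b) x) (h2 : IsMP (b * a) x)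
    (h3 : IsMP (star a * b) y) (h4 : IsMP (b * star a) y) :
    a * b = b * a ∧ star a * b = b * star a :=
  ⟨h1.symm.unique h2.symm, h3.symm.unique h4.symm⟩
end
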